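/- Easy-example pruning does not change the minimizer: let C₁ ⊆ C₂ be caches (both containing the base entries (i,0,0) for all i), let w¹ minimize 𝓑_{C₁}. If every entry (i,f,δ) ∈ C₂ \ C₁ satisfies ⟨w¹,f⟩ + δ < 0, then 𝓑_{C₁}(w¹) = min_w 𝓑_{C₂}(w) and w¹ is also the minimizer of 𝓑_{C₂}. -/

import Mathlib

/-- The cache objective `𝓑_C(w) = λ‖w‖² + Σ_i max_{(i,f,δ)∈C} (⟨w,f⟩ + δ)`. -/
noncomputable def Bcache (k N : ℕ) (lam : ℝ)
    (C : Finset (Fin k × (Fin N → ℝ) × ℝ))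
    (hC : ∀ i : Fin k, ((i, 0, 0) : Fin k × (Fin N → ℝ) × ℝ) ∈ C)
    (w : Fin N → ℝ) : ℝ :=
  lam * ∑ t, (w t) ^ 2 +
    ∑ i, (C.filter (fun e => e.1 = i)).sup'
      ⟨(i, 0, 0), Finset.mem_filter.mpr ⟨hC i, rfl⟩⟩
      (fun e => (∑ t, w t * e.2.1 t) + e.2.2)

theorem Finset.sup'_eq_of_subset_of_forall_le_sup' {α β : Type*} [SemilatticeSup α]
    {s t : Finset β} (hst : s ⊆ t) (hs : s.Nonempty) (f : β → α)
    (h : ∀ b ∈ t, b ∉ s → f b ≤ s.sup' hs f) :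
    t.sup' (hs.mono hst) f = s.sup' hs f := by
  refine le_antisymm (Finset.sup'_le _ _ fun b hb => ?_) (Finset.sup'_mono f hst hs)
  by_cases hbs : b ∈ s
  · exact Finset.le_sup' f hbs
  · exact h b hb hbs

section

variable {k N : ℕ} {lam : ℝ} {C₁ C₂ : Finset (Fin k × (Fin N → ℝ) × ℝ)}
  {hC₁ : ∀ i : Fin k, ((i, 0, 0) : Fin k × (Fin N → ℝ) × ℝ) ∈ C₁}
  {hC₂ : ∀ i : Fin k, ((i, 0, 0) : Fin k × (Fin N → ℝ) × ℝ) ∈ C₂}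

theorem Bcache_mono (hsub : C₁ ⊆ C₂) (w : Fin N → ℝ) :
    Bcache k N lam C₁ hC₁ w ≤ Bcache k N lam C₂ hC₂ w := by
  unfold Bcache
  gcongr with i
  exact Finset.sup'_mono _ (Finset.filter_subset_filter _ hsub) _

theorem Bcache_eq_of_forall_sdiff_neg (hsub : C₁ ⊆ C₂) (w : Fin N → ℝ)
    (hneg : ∀ e ∈ C₂ \ C₁, (∑ t, w t * e.2.1 t) + e.2.2 < 0) :
    Bcache k N lam C₂ hC₂ w = Bcache k N lam C₁ hC₁ w := by
  unfold Bcache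
  congr 1
  refine Finset.sum_congr rfl fun i _ => ?_
  refine Finset.sup'_eq_of_subset_of_forall_le_sup'
    (Finset.filter_subset_filter _ hsub) _ _ fun e he₂ he₁ => ?_
  -- the base entry `(i, 0, 0)` has value `0`, so the maximum over `C₁` is nonnegative
  have hbase := Finset.le_sup' (fun e : Fin k × (Fin N → ℝ) × ℝ => (∑ t, w t * e.2.1 t) + e.2.2)
    (Finset.mem_filter.mpr ⟨hC₁ i, rfl⟩ :
      ((i, 0, 0) : Fin k × (Fin N → ℝ) × ℝ) ∈ C₁.filter (fun e => e.1 = i))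
  simp only [Pi.zero_apply, mul_zero, Finset.sum_const_zero, add_zero] at hbase
  have he : e ∈ C₂ \ C₁ := by
    simp only [Finset.mem_filter] at he₁ he₂
    exact Finset.mem_sdiff.mpr ⟨he₂.1, fun h => he₁ ⟨h, he₂.2⟩⟩
  exact (hneg e he).le.trans hbase

end

theorem easy_pruning_general (k N : ℕ) (lam : ℝ)
    (C₁ C₂ : Finset (Fin k × (Fin N → ℝ) × ℝ)) (hsub : C₁ ⊆ C₂)
    (hC₁ : ∀ i : Fin k, ((i, 0, 0) : Fin k × (Fin N → ℝ) × ℝ) ∈ C₁)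
    (hC₂ : ∀ i : Fin k, ((i, 0, 0) : Fin k × (Fin N → ℝ) × ℝ) ∈ C₂)
    (w₁ : Fin N → ℝ)
    (h₁ : ∀ w, Bcache k N lam C₁ hC₁ w₁ ≤ Bcache k N lam C₁ hC₁ w)
    (heasy : ∀ e ∈ C₂ \ C₁, (∑ t, w₁ t * e.2.1 t) + e.2.2 < 0) :
    (∀ w, Bcache k N lam C₂ hC₂ w₁ ≤ Bcache k N lam C₂ hC₂ w) ∧
    Bcache k N lam C₂ hC₂ w₁ = Bcache k N lam C₁ hC₁ w₁ := by
  have heq : Bcache k N lam C₂ hC₂ w₁ = Bcache k N lam C₁ hC₁ w₁ :=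
    Bcache_eq_of_forall_sdiff_neg hsub w₁ heasy
  exact ⟨fun w => heq ▸ (h₁ w).trans (Bcache_mono hsub w), heq⟩

/-- Easy-example pruning: if every entry of `C₂ \ C₁` has negative value at the
minimizer `w¹` of `𝓑_{C₁}`, then `w¹` also minimizes `𝓑_{C₂}`, with the same
objective value. -/
theorem easy_pruning (k N : ℕ) (lam : ℝ) (hlam : 0 < lam)
    (C₁ C₂ : Finset (Fin k × (Fin N → ℝ) × ℝ)) (hsub : C₁ ⊆ C₂)
    (hC₁ : ∀ i : Fin k, ((i, 0, 0) : Fin k × (Fin N → ℝ) × ℝ) ∈ C₁)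
    (hC₂ : ∀ i : Fin k, ((i, 0, 0) : Fin k × (Fin N → ℝ) × ℝ) ∈ C₂)
    (w₁ : Fin N → ℝ)
    (h₁ : ∀ w, Bcache k N lam C₁ hC₁ w₁ ≤ Bcache k N lam C₁ hC₁ w)
    (heasy : ∀ e ∈ C₂ \ C₁, (∑ t, w₁ t * e.2.1 t) + e.2.2 < 0) :
    (∀ w, Bcache k N lam C₂ hC₂ w₁ ≤ Bcache k N lam C₂ hC₂ w) ∧
    Bcache k N lam C₂ hC₂ w₁ = Bcache k N lam C₁ hC₁ w₁ :=
  easy_pruning_general k N lam C₁ C₂ hsub hC₁ hC₂ w₁ h₁ heasy
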